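/- If a formula φ(x) is (n+1)-inductive for some n ∈ ℕ, then φ(x) is <-inductive. -/

import Mathlib

open FirstOrder Language

/-! ### The language `L_OR = {0, 1, +, ×, <}` of ordered rings -/

/-- Function symbols of the language of ordered rings. -/
inductive LorFunc : ℕ → Type
  | zero : LorFunc 0
  | one : LorFunc 0
  | add : LorFunc 2
  | mul : LorFunc 2

/-- Relation symbols of the language of ordered rings: just `<`. -/
inductive LorRel : ℕ → Type
  | lt : LorRel 2

/-- The first-order language of ordered rings. -/
def Lor : Language := ⟨LorFunc, LorRel⟩

/-- The term `0`. -/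
def zeroT {α : Type} : Lor.Term α := Constants.term LorFunc.zero

/-- The term `1`. -/
def oneT {α : Type} : Lor.Term α := Constants.term LorFunc.one

/-- Addition of terms. -/
def addT {α : Type} (t u : Lor.Term α) : Lor.Term α := Functions.apply₂ LorFunc.add t u

/-- Multiplication of terms. -/
def mulT {α : Type} (t u : Lor.Term α) : Lor.Term α := Functions.apply₂ LorFunc.mul t u

/-- The term `2`, an abbreviation for `1 + 1`. -/
def twoT {α : Type} : Lor.Term α := addT oneT oneT

/-- The numeral `k`, i.e. the closed term `(⋯((0+1)+1)+⋯+1)` with `k` ones. -/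
def numT {α : Type} : ℕ → Lor.Term α
  | 0 => zeroT
  | n + 1 => addT (numT n) oneT

/-- The bounded formula `t < u`. -/
def ltBF {α : Type} {n : ℕ} (t u : Lor.Term (α ⊕ Fin n)) : Lor.BoundedFormula α n :=
  Relations.boundedFormula₂ LorRel.lt t u

/-- The formula `t < u`. -/
def ltFml {α : Type} (t u : Lor.Term α) : Lor.Formula α :=
  Relations.formula₂ LorRel.lt t u

/-- The formula `t ≤ u`, an abbreviation for `t < u ∨ t = u`. -/
def leFml {α : Type} (t u : Lor.Term α) : Lor.Formula α :=
  ltFml t u ⊔ Term.equal t u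

/-! ### The base theory `PA⁻` -/

/-- `PA⁻`, the theory of non-negative parts of discretely ordered rings. -/
def PAminus : Lor.Theory :=
  { -- (P1) associativity of +
    ∀' ∀' ∀' (addT (addT &0 &1) &2 =' addT &0 (addT &1 &2)),
    -- (P2) commutativity of +
    ∀' ∀' (addT &0 &1 =' addT &1 &0),
    -- (P3) associativity of ×
    ∀' ∀' ∀' (mulT (mulT &0 &1) &2 =' mulT &0 (mulT &1 &2)),
    -- (P4) commutativity of ×
    ∀' ∀' (mulT &0 &1 =' mulT &1 &0),
    -- (P5) distributivity
    ∀' ∀' ∀' (mulT &0 (addT &1 &2) =' addT (mulT &0 &1) (mulT &0 &2)),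
    -- (P6) x + 0 = x
    ∀' (addT &0 zeroT =' &0),
    -- (P7) x × 0 = 0
    ∀' (mulT &0 zeroT =' zeroT),
    -- (P8) x × 1 = x
    ∀' (mulT &0 oneT =' &0),
    -- (P9) transitivity of <
    ∀' ∀' ∀' (ltBF &0 &1 ⊓ ltBF &1 &2 ⟹ ltBF &0 &2),
    -- (P10) irreflexivity of <
    ∀' ∼(ltBF &0 &0),
    -- (P11) linearity of <
    ∀' ∀' (ltBF &0 &1 ⊔ &0 =' &1 ⊔ ltBF &1 &0),
    -- (P12) x < y → x + z < y + z
    ∀' ∀' ∀' (ltBF &0 &1 ⟹ ltBF (addT &0 &2) (addT &1 &2)),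
    -- (P13) z ≠ 0 ∧ x < y → x × z < y × z
    ∀' ∀' ∀' (∼(&2 =' zeroT) ⊓ ltBF &0 &1 ⟹ ltBF (mulT &0 &2) (mulT &1 &2)),
    -- (P14) x < y ↔ ∃z ((x + z) + 1 = y)
    ∀' ∀' (ltBF &0 &1 ⇔ ∃' (addT (addT &0 &2) oneT =' &1)),
    -- (P15) 0 < 1 ∧ (x > 0 → x ≥ 1)
    ltBF zeroT oneT ⊓ ∀' (ltBF zeroT &0 ⟹ ltBF oneT &0 ⊔ oneT =' &0),
    -- (P16) x ≥ 0
    ∀' (ltBF zeroT &0 ⊔ zeroT =' &0) }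

/-! ### Formulas `θ(x, z̄)` with a distinguished variable `x` and parameters `z̄`

A formula `θ(x, z̄)` with `m` parameters `z̄` and a distinguished induction
variable `x` is represented as `θ : Lor.Formula (Fin m ⊕ Fin 1)`, where the
`Fin m` component gives the parameters and the `Fin 1` component gives `x`. -/

/-- The distinguished variable `x` as a term. -/
def xT {m : ℕ} : Lor.Term (Fin m ⊕ Fin 1) := Term.var (Sum.inr 0)

/-- `θ(t, z̄)`, where `t` is a term possibly involving `x` and the parameters. -/
def substX {m : ℕ} (θ : Lor.Formula (Fin m ⊕ Fin 1)) (t : Lor.Term (Fin m ⊕ Fin 1)) :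
    Lor.Formula (Fin m ⊕ Fin 1) :=
  θ.subst (Sum.elim (fun i => Term.var (Sum.inl i)) fun _ => t)

/-- `θ(t, z̄)` where `t` is a term in the parameters only. -/
def substP {m : ℕ} (θ : Lor.Formula (Fin m ⊕ Fin 1)) (t : Lor.Term (Fin m)) :
    Lor.Formula (Fin m) :=
  θ.subst (Sum.elim (fun i => Term.var i) fun _ => t)

/-- `∀x θ(x, z̄)`. -/
noncomputable def allX {m : ℕ} (θ : Lor.Formula (Fin m ⊕ Fin 1)) : Lor.Formula (Fin m) :=
  Formula.iAlls (Fin 1) θ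

/-- The universal closure of a formula, as a sentence. -/
noncomputable def closeAll {α : Type} [Finite α] (φ : Lor.Formula α) : Lor.Sentence :=
  Formula.iAlls α (φ.relabel (Sum.inr : α → Empty ⊕ α))

/-- `∀x' < x, θ(x', z̄)`, a formula with free variable `x` (and parameters). -/
noncomputable def allLtX {m : ℕ} (θ : Lor.Formula (Fin m ⊕ Fin 1)) :
    Lor.Formula (Fin m ⊕ Fin 1) :=
  Formula.iAlls (Fin 1)
    (ltFml (Term.var (Sum.inr 0)) (Term.var (Sum.inl (Sum.inr 0))) ⟹
      θ.relabel (Sum.elim (fun i => Sum.inl (Sum.inl i)) fun _ => Sum.inr 0))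

/-- `∀x' ≤ x, θ(x', z̄)`, a formula with free variable `x` (and parameters). -/
noncomputable def allLeX {m : ℕ} (θ : Lor.Formula (Fin m ⊕ Fin 1)) :
    Lor.Formula (Fin m ⊕ Fin 1) :=
  Formula.iAlls (Fin 1)
    (leFml (Term.var (Sum.inr 0)) (Term.var (Sum.inl (Sum.inr 0))) ⟹
      θ.relabel (Sum.elim (fun i => Sum.inl (Sum.inl i)) fun _ => Sum.inr 0))

/-- The conjunction `⋀_{k<j} θ(k, z̄)`. -/
def conjNum {m : ℕ} (θ : Lor.Formula (Fin m ⊕ Fin 1)) : ℕ → Lor.Formula (Fin m)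
  | 0 => ⊤
  | j + 1 => conjNum θ j ⊓ substP θ (numT j)

/-- The conjunction `⋀_{k<j} θ(x+k, z̄)`. -/
def conjShift {m : ℕ} (θ : Lor.Formula (Fin m ⊕ Fin 1)) : ℕ → Lor.Formula (Fin m ⊕ Fin 1)
  | 0 => ⊤
  | j + 1 => conjShift θ j ⊓ substX θ (addT xT (numT j))

/-! ### Induction axioms -/

/-- The induction axiom `I_x θ`:
`∀z̄( θ(0,z̄) ∧ ∀x(θ(x,z̄) → θ(x+1,z̄)) → ∀x θ(x,z̄) )`. -/
noncomputable def indAx {m : ℕ} (θ : Lor.Formula (Fin m ⊕ Fin 1)) : Lor.Sentence :=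
  closeAll ((substP θ zeroT ⊓ allX (θ ⟹ substX θ (addT xT oneT))) ⟹ allX θ)

/-- The `<`-induction axiom `I^<_x θ`:
`∀z̄( ∀y(∀x<y θ(x,z̄) → θ(y,z̄)) → ∀x θ(x,z̄) )`. -/
noncomputable def indLtAx {m : ℕ} (θ : Lor.Formula (Fin m ⊕ Fin 1)) : Lor.Sentence :=
  closeAll (allX (allLtX θ ⟹ θ) ⟹ allX θ)

/-- The `(n+1)`-step induction axiom `I^{(n+1)-step}_x θ`:
`∀z̄( ⋀_{k<n+1} θ(k,z̄) ∧ ∀x(θ(x,z̄) → θ(x+n+1,z̄)) → ∀x θ(x,z̄) )`. -/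
noncomputable def indStepAx {m : ℕ} (n : ℕ) (θ : Lor.Formula (Fin m ⊕ Fin 1)) : Lor.Sentence :=
  closeAll ((conjNum θ (n + 1) ⊓ allX (θ ⟹ substX θ (addT xT (numT (n + 1))))) ⟹ allX θ)

/-- The `(n+1)`-induction axiom `I^{n+1}_x θ`:
`∀z̄( ⋀_{k<n+1} θ(k,z̄) ∧ ∀x(⋀_{k<n+1} θ(x+k,z̄) → θ(x+n+1,z̄)) → ∀x θ(x,z̄) )`. -/
noncomputable def indKAx {m : ℕ} (n : ℕ) (θ : Lor.Formula (Fin m ⊕ Fin 1)) : Lor.Sentence :=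
  closeAll ((conjNum θ (n + 1) ⊓ allX (conjShift θ (n + 1) ⟹ substX θ (addT xT (numT (n + 1))))) ⟹
    allX θ)

/-- The polynomial induction axiom `I^p_x θ`:
`∀z̄( θ(0,z̄) ∧ ∀x(θ(x,z̄) → θ(2x,z̄) ∧ θ(2x+1,z̄)) → ∀x θ(x,z̄) )`, where `2x` is `(1+1)×x`. -/
noncomputable def indPAx {m : ℕ} (θ : Lor.Formula (Fin m ⊕ Fin 1)) : Lor.Sentence :=
  closeAll ((substP θ zeroT ⊓
      allX (θ ⟹ substX θ (mulT twoT xT) ⊓ substX θ (addT (mulT twoT xT) oneT))) ⟹ allX θ)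

/-! ### Theories -/

/-- Peano arithmetic: `PA⁻` plus induction for all `L_OR` formulas. -/
noncomputable def PA : Lor.Theory :=
  PAminus ∪ {σ | ∃ (m : ℕ) (θ : Lor.Formula (Fin m ⊕ Fin 1)), σ = indAx θ}

/-- `IOpen`: `PA⁻` plus induction for all quantifier-free `L_OR` formulas. -/
noncomputable def IOpen : Lor.Theory :=
  PAminus ∪ {σ | ∃ (m : ℕ) (θ : Lor.Formula (Fin m ⊕ Fin 1)), θ.IsQF ∧ σ = indAx θ}

/-! ### Notions of inductiveness

A formula `φ(x)` with exactly one free variable `x` is represented as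
`φ : Lor.Formula (Fin 0 ⊕ Fin 1)` (no parameters). -/

/-- Formulas `φ(x)` with exactly one free variable `x`. -/
abbrev OneVarFormula : Type := Lor.Formula (Fin 0 ⊕ Fin 1)

/-- The sentence `∀x φ(x)`. -/
noncomputable def allS (φ : OneVarFormula) : Lor.Sentence := closeAll (allX φ)

/-- `φ(x)` is inductive: `PA⁻ ⊢ φ(0)` and `PA⁻ ⊢ ∀x(φ(x) → φ(x+1))`. -/
noncomputable def IsInductive (φ : OneVarFormula) : Prop :=
  PAminus ⊨ᵇ closeAll (substP φ zeroT) ∧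
    PAminus ⊨ᵇ closeAll (allX (φ ⟹ substX φ (addT xT oneT)))

/-- `φ(x)` is `<`-inductive: `PA⁻ ⊢ ∀y(∀x<y φ(x) → φ(y))`. -/
noncomputable def IsLtInductive (φ : OneVarFormula) : Prop :=
  PAminus ⊨ᵇ closeAll (allX (allLtX φ ⟹ φ))

/-- `φ(x)` is `(n+1)`-step inductive:
`PA⁻ ⊢ ⋀_{k<n+1} φ(k) ∧ ∀x(φ(x) → φ(x+n+1))`. -/
noncomputable def IsStepInductive (n : ℕ) (φ : OneVarFormula) : Prop :=
  PAminus ⊨ᵇ closeAll (conjNum φ (n + 1) ⊓ allX (φ ⟹ substX φ (addT xT (numT (n + 1)))))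

/-- `φ(x)` is `(n+1)`-inductive:
`PA⁻ ⊢ ⋀_{k<n+1} φ(k) ∧ ∀x(⋀_{k<n+1} φ(x+k) → φ(x+n+1))`. -/
noncomputable def IsKInductive (n : ℕ) (φ : OneVarFormula) : Prop :=
  PAminus ⊨ᵇ
    closeAll (conjNum φ (n + 1) ⊓ allX (conjShift φ (n + 1) ⟹ substX φ (addT xT (numT (n + 1)))))

/-- `φ(x)` is p-inductive (polynomially inductive):
`PA⁻ ⊢ φ(0) ∧ ∀x(φ(x) → φ(2x) ∧ φ(2x+1))`. -/
noncomputable def IsPInductive (φ : OneVarFormula) : Prop :=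
  PAminus ⊨ᵇ closeAll (substP φ zeroT ⊓
    allX (φ ⟹ substX φ (mulT twoT xT) ⊓ substX φ (addT (mulT twoT xT) oneT)))

/-! ### Cuts -/

/-- `φ(x)` is a cut: an inductive formula with `PA⁻ ⊢ ∀x∀y(x<y ∧ φ(y) → φ(x))`. -/
noncomputable def IsCut (φ : OneVarFormula) : Prop :=
  IsInductive φ ∧
    PAminus ⊨ᵇ closeAll
      (ltFml (Term.var (Sum.inr 0) : Lor.Term (Fin 0 ⊕ Fin 2)) (Term.var (Sum.inr 1)) ⊓
          φ.relabel (Sum.elim (fun i => Sum.inl i) fun _ => Sum.inr 1) ⟹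
        φ.relabel (Sum.elim (fun i => Sum.inl i) fun _ => Sum.inr 0))

/-- `φ(x)` is an a-cut: a cut with `PA⁻ ⊢ ∀x(φ(x) → φ(x+x))`. -/
noncomputable def IsACut (φ : OneVarFormula) : Prop :=
  IsCut φ ∧ PAminus ⊨ᵇ closeAll (allX (φ ⟹ substX φ (addT xT xT)))

/-- `φ(x)` is an am-cut: an a-cut with `PA⁻ ⊢ ∀x(φ(x) → φ(x×x))`. -/
noncomputable def IsAMCut (φ : OneVarFormula) : Prop :=
  IsACut φ ∧ PAminus ⊨ᵇ closeAll (allX (φ ⟹ substX φ (mulT xT xT)))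

/-! Work in an arbitrary model of `PA⁻`. An element `y` with all of its predecessors in `φ` is
either a numeral `k ≤ n`, where `φ` holds by the base case, or of the form `a + (n+1)`; then
`a, a+1, …, a+n` all lie below `y`, so the step case gives `φ(y)`. No induction in the model is
needed, only discreteness of `<` (nothing lies strictly between `a` and `a+1`), which makes every
element below a numeral a numeral. -/

lemma forall_fun_fin_one {α : Type*} {P : (Fin 1 → α) → Prop} :
    (∀ f, P f) ↔ ∀ a : α, P fun _ => a :=
  ⟨fun h _ => h _, fun h f =>
    (funext fun j => congrArg f (Subsingleton.elim 0 j) : (fun _ => f 0) = f) ▸ h (f 0)⟩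

namespace Lor

open Structure

variable {M : Type} [Lor.Structure M]

scoped instance : Zero M := ⟨funMap (L := Lor) LorFunc.zero default⟩
scoped instance : One M := ⟨funMap (L := Lor) LorFunc.one default⟩
scoped instance : Add M := ⟨fun a b => funMap (L := Lor) LorFunc.add ![a, b]⟩
scoped instance : LT M := ⟨fun a b => RelMap (L := Lor) LorRel.lt ![a, b]⟩

def num : ℕ → M
  | 0 => 0
  | k + 1 => num k + 1

@[simp] lemma realize_zeroT {α : Type} (v : α → M) : zeroT.realize v = 0 :=
  Term.realize_constants

@[simp] lemma realize_oneT {α : Type} (v : α → M) : oneT.realize v = 1 :=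
  Term.realize_constants

@[simp] lemma realize_addT {α : Type} (v : α → M) (t u : Lor.Term α) :
    (addT t u).realize v = t.realize v + u.realize v :=
  Term.realize_functions_apply₂

@[simp] lemma realize_numT {α : Type} (v : α → M) (k : ℕ) : (numT k).realize v = num k := by
  induction k with
  | zero => exact realize_zeroT v
  | succ k ih => simp [numT, num, ih]

@[simp] lemma realize_ltBF {α : Type} {n : ℕ} (t u : Lor.Term (α ⊕ Fin n)) (v : α → M)
    (xs : Fin n → M) :
    (ltBF t u).Realize v xs ↔ t.realize (Sum.elim v xs) < u.realize (Sum.elim v xs) :=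
  BoundedFormula.realize_rel₂

@[simp] lemma realize_ltFml {α : Type} (t u : Lor.Term α) (v : α → M) :
    (ltFml t u).Realize v ↔ t.realize v < u.realize v :=
  Formula.realize_rel₂

section Realize

variable {m : ℕ}

lemma realize_closeAll {α : Type} [Finite α] (φ : Lor.Formula α) :
    M ⊨ closeAll φ ↔ ∀ v : α → M, φ.Realize v := by
  simp only [closeAll, Sentence.Realize, Formula.realize_iAlls, Formula.realize_relabel]
  rfl

lemma realize_allX (θ : Lor.Formula (Fin m ⊕ Fin 1)) (v : Fin m → M) :
    (allX θ).Realize v ↔ ∀ a : M, θ.Realize (Sum.elim v fun _ => a) := by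
  rw [allX, Formula.realize_iAlls, forall_fun_fin_one]

lemma realize_substX (θ : Lor.Formula (Fin m ⊕ Fin 1)) (t : Lor.Term (Fin m ⊕ Fin 1))
    (w : Fin m ⊕ Fin 1 → M) :
    (substX θ t).Realize w ↔ θ.Realize (Sum.elim (w ∘ Sum.inl) fun _ => t.realize w) := by
  rw [substX, Formula.Realize, BoundedFormula.realize_subst]
  exact iff_of_eq (by congr; ext (i | i) <;> rfl)

lemma realize_substP (θ : Lor.Formula (Fin m ⊕ Fin 1)) (t : Lor.Term (Fin m)) (v : Fin m → M) :
    (substP θ t).Realize v ↔ θ.Realize (Sum.elim v fun _ => t.realize v) := by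
  rw [substP, Formula.Realize, BoundedFormula.realize_subst]
  exact iff_of_eq (by congr; ext (i | i) <;> rfl)

lemma realize_allLtX (θ : Lor.Formula (Fin m ⊕ Fin 1)) (w : Fin m ⊕ Fin 1 → M) :
    (allLtX θ).Realize w ↔
      ∀ b < w (Sum.inr 0), θ.Realize (Sum.elim (w ∘ Sum.inl) fun _ => b) := by
  rw [allLtX, Formula.realize_iAlls, forall_fun_fin_one]
  refine forall_congr' fun b => ?_
  rw [Formula.realize_imp, realize_ltFml, Formula.realize_relabel]
  congr! 2
  ext (i | i) <;> rfl

lemma realize_conjNum (θ : Lor.Formula (Fin m ⊕ Fin 1)) (j : ℕ) (v : Fin m → M) :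
    (conjNum θ j).Realize v ↔ ∀ k < j, θ.Realize (Sum.elim v fun _ => num k) := by
  induction j with
  | zero => simp [conjNum]
  | succ j ih =>
    simp only [conjNum, Formula.realize_inf, ih, realize_substP, realize_numT,
      Nat.lt_succ_iff_lt_or_eq, or_imp, forall_and, forall_eq]

lemma realize_conjShift (θ : Lor.Formula (Fin m ⊕ Fin 1)) (j : ℕ) (w : Fin m ⊕ Fin 1 → M) :
    (conjShift θ j).Realize w ↔
      ∀ k < j, θ.Realize (Sum.elim (w ∘ Sum.inl) fun _ => w (Sum.inr 0) + num k) := by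
  induction j with
  | zero => simp [conjShift]
  | succ j ih =>
    simp only [conjShift, Formula.realize_inf, ih, realize_substX, realize_addT, realize_numT,
      Nat.lt_succ_iff_lt_or_eq, or_imp, forall_and, forall_eq]
    rfl

end Realize

section Model

variable [M ⊨ PAminus]

lemma add_assoc (a b c : M) : a + b + c = a + (b + c) := by
  have := Theory.realize_sentence_of_mem (M := M) PAminus
    (φ := ∀' ∀' ∀' (addT (addT &0 &1) &2 =' addT &0 (addT &1 &2))) (by simp [PAminus])
  simpa [Fin.snoc] using this a b c

lemma add_comm (a b : M) : a + b = b + a := by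
  have := Theory.realize_sentence_of_mem (M := M) PAminus
    (φ := ∀' ∀' (addT &0 &1 =' addT &1 &0)) (by simp [PAminus])
  simpa [Fin.snoc] using this a b

lemma add_zero (a : M) : a + 0 = a := by
  have := Theory.realize_sentence_of_mem (M := M) PAminus
    (φ := ∀' (addT &0 zeroT =' &0)) (by simp [PAminus])
  simpa [Fin.snoc] using this a

lemma lt_trans {a b c : M} : a < b → b < c → a < c := by
  have := Theory.realize_sentence_of_mem (M := M) PAminus
    (φ := ∀' ∀' ∀' (ltBF &0 &1 ⊓ ltBF &1 &2 ⟹ ltBF &0 &2)) (by simp [PAminus])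
  simpa [Fin.snoc] using this a b c

lemma lt_irrefl (a : M) : ¬a < a := by
  have := Theory.realize_sentence_of_mem (M := M) PAminus
    (φ := ∀' ∼(ltBF &0 &0)) (by simp [PAminus])
  simpa [Fin.snoc] using this a

lemma lt_trichotomy (a b : M) : a < b ∨ a = b ∨ b < a := by
  have := Theory.realize_sentence_of_mem (M := M) PAminus
    (φ := ∀' ∀' (ltBF &0 &1 ⊔ &0 =' &1 ⊔ ltBF &1 &0)) (by simp [PAminus])
  simpa [Fin.snoc, or_assoc] using this a b

lemma add_lt_add_right {a b : M} (c : M) : a < b → a + c < b + c := by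
  have := Theory.realize_sentence_of_mem (M := M) PAminus
    (φ := ∀' ∀' ∀' (ltBF &0 &1 ⟹ ltBF (addT &0 &2) (addT &1 &2))) (by simp [PAminus])
  simpa [Fin.snoc] using this a b c

lemma lt_iff_exists_add_add_one (a b : M) : a < b ↔ ∃ z, a + z + 1 = b := by
  have := Theory.realize_sentence_of_mem (M := M) PAminus
    (φ := ∀' ∀' (ltBF &0 &1 ⇔ ∃' (addT (addT &0 &2) oneT =' &1))) (by simp [PAminus])
  simpa [Fin.snoc] using this a b

lemma zero_lt_or_eq (a : M) : 0 < a ∨ 0 = a := by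
  have := Theory.realize_sentence_of_mem (M := M) PAminus
    (φ := ∀' (ltBF zeroT &0 ⊔ zeroT =' &0)) (by simp [PAminus])
  simpa [Fin.snoc] using this a

lemma zero_add (a : M) : 0 + a = a := by rw [add_comm, add_zero]

lemma add_lt_add_left {a b : M} (c : M) (h : a < b) : c + a < c + b := by
  rw [add_comm c, add_comm c]
  exact add_lt_add_right c h

lemma lt_add_one (a : M) : a < a + 1 :=
  (lt_iff_exists_add_add_one a _).2 ⟨0, by rw [add_zero]⟩

lemma not_lt_zero (a : M) : ¬a < 0 := by
  rcases zero_lt_or_eq a with h | rfl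
  · exact fun h' => lt_irrefl a (lt_trans h' h)
  · exact lt_irrefl 0

lemma lt_add_one_iff {a b : M} : b < a + 1 ↔ b < a ∨ b = a := by
  refine ⟨fun h => ?_, ?_⟩
  · rcases lt_trichotomy b a with hba | rfl | hab
    · exact Or.inl hba
    · exact Or.inr rfl
    · exfalso
      obtain ⟨z, rfl⟩ := (lt_iff_exists_add_add_one a _).1 hab
      rcases zero_lt_or_eq z with hz | rfl
      · have hz' : a < a + z := by simpa only [add_zero] using add_lt_add_left a hz
        exact lt_irrefl _ (lt_trans h (add_lt_add_right 1 hz'))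
      · rw [add_zero] at h
        exact lt_irrefl _ h
  · rintro (h | rfl)
    · exact lt_trans h (lt_add_one a)
    · exact lt_add_one b

lemma num_lt_num {j k : ℕ} (h : j < k) : (num j : M) < num k := by
  induction k with
  | zero => omega
  | succ k ih => exact lt_add_one_iff.2 ((Nat.lt_succ_iff_lt_or_eq.1 h).imp ih (congrArg num))

lemma exists_eq_num_of_lt_num {k : ℕ} {b : M} (h : b < num k) : ∃ j < k, b = num j := by
  induction k with
  | zero => exact absurd h (not_lt_zero b)
  | succ k ih =>
    rcases lt_add_one_iff.1 h with h | rfl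
    · obtain ⟨j, hj, rfl⟩ := ih h
      exact ⟨j, by omega, rfl⟩
    · exact ⟨k, by omega, rfl⟩

lemma exists_eq_num_or_eq_add_num (n : ℕ) (b : M) :
    (∃ j < n, b = num j) ∨ ∃ a, b = a + num n := by
  rcases lt_trichotomy b (num n) with h | rfl | h
  · exact Or.inl (exists_eq_num_of_lt_num h)
  · exact Or.inr ⟨0, (zero_add _).symm⟩
  · obtain ⟨z, rfl⟩ := (lt_iff_exists_add_add_one _ _).1 h
    exact Or.inr ⟨z + 1, by rw [add_assoc, add_comm]⟩

theorem of_forall_lt_of_kInduction {n : ℕ} {P : M → Prop}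
    (base : ∀ k < n + 1, P (num k))
    (step : ∀ a, (∀ k < n + 1, P (a + num k)) → P (a + num (n + 1)))
    (b : M) (hb : ∀ c < b, P c) : P b := by
  rcases exists_eq_num_or_eq_add_num (n + 1) b with ⟨j, hj, rfl⟩ | ⟨a, rfl⟩
  · exact base j hj
  · exact step a fun k hk => hb _ (add_lt_add_left a (num_lt_num hk))

end Model

end Lor

/-- If a formula `φ(x)` is `(n+1)`-inductive for some `n ∈ ℕ`, then it is
`<`-inductive. -/
theorem stmt13 (φ : OneVarFormula) (h : ∃ n : ℕ, IsKInductive n φ) :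
    IsLtInductive φ := by
  obtain ⟨n, h⟩ := h
  refine Theory.models_sentence_iff.2 fun M => ?_
  have hM := Theory.models_sentence_iff.1 h M
  simp only [Lor.realize_closeAll, Formula.realize_inf, Formula.realize_imp, Lor.realize_conjNum,
    Lor.realize_allX, Lor.realize_conjShift, Lor.realize_substX, Lor.realize_allLtX,
    Lor.realize_addT, Lor.realize_numT, xT, Term.realize_var, Sum.elim_inr,
    Sum.elim_comp_inl] at hM ⊢
  intro v
  obtain ⟨base, step⟩ := hM v
  exact Lor.of_forall_lt_of_kInduction base step
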